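/- Let R, S, T be unbounded subsets of a metric space X. If s⁺(S,T) = 0, then s⁺(R,T) ≤ s⁺(R,S) and s⁺(S,R) ≤ s⁺(T,R). Consequently, if S and T are linearly equivalent (i.e., s(S,T)=0), then s⁺(R,S) = s⁺(R,T), s⁺(S,R) = s⁺(T,R), and t(R,S) = t(R,T). -/
import Mathlib

open Metric Set Bornology Filter

def cone {X : Type*} [MetricSpace X] (o : X) (R : Set X) (α a : ℝ) : Set X :=
  ⋃ x ∈ R, Metric.closedBall x (α * dist o x + a)

noncomputable def sPlus {X : Type*} [MetricSpace X] (o : X) (R S : Set X) : ℝ :=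
  sInf {α : ℝ | 0 ≤ α ∧ ∃ a : ℝ, 0 ≤ a ∧ S ⊆ cone o R α a}

lemma mem_cone_iff {X : Type*} [MetricSpace X] (o : X) (R : Set X) (α a : ℝ) (y : X) :
    y ∈ cone o R α a ↔ ∃ x ∈ R, dist y x ≤ α * dist o x + a := by
  simp [cone, mem_iUnion, Metric.mem_closedBall]

lemma cone_comp {X : Type*} [MetricSpace X] (o : X) (A B C : Set X) {β b γ c : ℝ}
    (hγ0 : 0 ≤ γ) (hCD : C ⊆ cone o B γ c) (hBC : B ⊆ cone o A β b) :
    C ⊆ cone o A (β + γ + γ * β) (b + γ * b + c) := by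
  intro y hy
  obtain ⟨x, hxB, hxy⟩ := (mem_cone_iff o B γ c y).1 (hCD hy)
  obtain ⟨z, hzA, hzx⟩ := (mem_cone_iff o A β b x).1 (hBC hxB)
  rw [mem_cone_iff]
  refine ⟨z, hzA, ?_⟩
  have h1 : dist o x ≤ dist o z + (β * dist o z + b) :=
    le_trans (dist_triangle o z x) (by linarith [dist_comm x z ▸ hzx])
  have h2 : dist y z ≤ dist y x + dist x z := dist_triangle y x z
  have h3 : γ * dist o x ≤ γ * (dist o z + (β * dist o z + b)) :=
    mul_le_mul_of_nonneg_left h1 hγ0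
  have h4 : dist x z = dist z x := dist_comm x z
  nlinarith [hzx, hxy]

lemma subset_cone_two {X : Type*} [MetricSpace X] (o : X) {R : Set X}
    (hR : ¬ Bornology.IsBounded R) (S : Set X) : S ⊆ cone o R 2 0 := by
  intro y hy
  rw [mem_cone_iff]
  have : ¬ ∃ r, R ⊆ Metric.closedBall o r := by
    intro ⟨r, hr⟩; exact hR ((Metric.isBounded_closedBall).subset hr)
  push_neg at this
  obtain ⟨x, hxR, hx⟩ := not_subset.1 (this (dist o y))
  rw [Metric.mem_closedBall, not_le] at hx
  refine ⟨x, hxR, ?_⟩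
  have := dist_triangle y o x
  have hxo : dist x o = dist o x := dist_comm x o
  have hyo : dist y o = dist o y := dist_comm y o
  linarith

lemma sPlus_set_nonempty {X : Type*} [MetricSpace X] (o : X) {R : Set X}
    (hR : ¬ Bornology.IsBounded R) (S : Set X) :
    {α : ℝ | 0 ≤ α ∧ ∃ a : ℝ, 0 ≤ a ∧ S ⊆ cone o R α a}.Nonempty :=
  ⟨2, by norm_num, 0, le_rfl, subset_cone_two o hR S⟩

lemma sPlus_set_bddBelow {X : Type*} [MetricSpace X] (o : X) (R S : Set X) :
    BddBelow {α : ℝ | 0 ≤ α ∧ ∃ a : ℝ, 0 ≤ a ∧ S ⊆ cone o R α a} :=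
  ⟨0, fun _ hα => hα.1⟩

lemma sPlus_nonneg {X : Type*} [MetricSpace X] (o : X) (R S : Set X) :
    0 ≤ sPlus o R S :=
  Real.sInf_nonneg (fun _ hα => hα.1)

lemma tri1 {X : Type*} [MetricSpace X] (o : X) {R S T : Set X}
    (hR : ¬ Bornology.IsBounded R) (hS : ¬ Bornology.IsBounded S)
    (h0 : sPlus o S T = 0) : sPlus o R T ≤ sPlus o R S := by
  apply le_csInf (sPlus_set_nonempty o hR S)
  rintro α ⟨hα0, a, ha0, hcov⟩
  apply le_of_forall_pos_le_add
  intro ε hε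
  have h1α : (0:ℝ) < 1 + α := by linarith
  have hlt : sInf {β : ℝ | 0 ≤ β ∧ ∃ b : ℝ, 0 ≤ b ∧ T ⊆ cone o S β b} < ε / (1 + α) := by
    rw [show sInf {β : ℝ | 0 ≤ β ∧ ∃ b : ℝ, 0 ≤ b ∧ T ⊆ cone o S β b} = 0 from h0]
    exact div_pos hε h1α
  obtain ⟨β, ⟨hβ0, b, hb0, hcovST⟩, hβlt⟩ := exists_lt_of_csInf_lt (sPlus_set_nonempty o hS T) hlt
  have hcomp := cone_comp o R S T hβ0 hcovST hcov
  have hle : sPlus o R T ≤ α + β + β * α :=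
    csInf_le (sPlus_set_bddBelow o R T)
      ⟨by positivity, a + β * a + b, by positivity, hcomp⟩
  have : β * (1 + α) < ε := (lt_div_iff₀ h1α).1 hβlt
  nlinarith

lemma tri2 {X : Type*} [MetricSpace X] (o : X) {R S T : Set X}
    (hS : ¬ Bornology.IsBounded S) (hT : ¬ Bornology.IsBounded T)
    (h0 : sPlus o S T = 0) : sPlus o S R ≤ sPlus o T R := by
  apply le_csInf (sPlus_set_nonempty o hT R)
  rintro γ ⟨hγ0, c, hc0, hcov⟩
  apply le_of_forall_pos_le_add
  intro ε hε
  have h1γ : (0:ℝ) < 1 + γ := by linarith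
  have hlt : sInf {β : ℝ | 0 ≤ β ∧ ∃ b : ℝ, 0 ≤ b ∧ T ⊆ cone o S β b} < ε / (1 + γ) := by
    rw [show sInf {β : ℝ | 0 ≤ β ∧ ∃ b : ℝ, 0 ≤ b ∧ T ⊆ cone o S β b} = 0 from h0]
    exact div_pos hε h1γ
  obtain ⟨β, ⟨hβ0, b, hb0, hcovST⟩, hβlt⟩ := exists_lt_of_csInf_lt (sPlus_set_nonempty o hS T) hlt
  have hcomp := cone_comp o S T R hγ0 hcov hcovST
  have hle : sPlus o S R ≤ β + γ + γ * β :=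
    csInf_le (sPlus_set_bddBelow o S R)
      ⟨by positivity, b + γ * b + c, by positivity, hcomp⟩
  have : β * (1 + γ) < ε := (lt_div_iff₀ h1γ).1 hβlt
  nlinarith

noncomputable def sFun {X : Type*} [MetricSpace X] (o : X) (R S : Set X) : ℝ :=
  max (sPlus o R S) (sPlus o S R)

noncomputable def tFun {X : Type*} [MetricSpace X] (o : X) (R S : Set X) : ℝ :=
  Real.sqrt (sFun o R S)

theorem stmt6 {X : Type*} [MetricSpace X] (o : X) (R S T : Set X)
    (hR : ¬ Bornology.IsBounded R) (hS : ¬ Bornology.IsBounded S)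
    (hT : ¬ Bornology.IsBounded T) :
    (sPlus o S T = 0 → sPlus o R T ≤ sPlus o R S ∧ sPlus o S R ≤ sPlus o T R) ∧
    (sFun o S T = 0 →
      sPlus o R S = sPlus o R T ∧ sPlus o S R = sPlus o T R ∧
      tFun o R S = tFun o R T) := by
  constructor
  · intro h0
    exact ⟨tri1 o hR hS h0, tri2 o hS hT h0⟩
  · intro h0
    have hST : sPlus o S T = 0 :=
      le_antisymm (le_trans (le_max_left _ _) h0.le) (sPlus_nonneg o S T)
    have hTS : sPlus o T S = 0 :=
      le_antisymm (le_trans (le_max_right _ _) h0.le) (sPlus_nonneg o T S)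
    have h1 : sPlus o R S = sPlus o R T :=
      le_antisymm (tri1 o hR hT hTS) (tri1 o hR hS hST)
    have h2 : sPlus o S R = sPlus o T R :=
      le_antisymm (tri2 o hS hT hST) (tri2 o hT hS hTS)
    refine ⟨h1, h2, ?_⟩
    unfold tFun sFun
    rw [h1, h2]
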